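/- arXiv:2105.12557 — 10 statements merged into one kernel-verified Lean document; each statement's English description precedes it below -/
import Mathlib

section
/- For any finite simple graph G, there exists a subset D of V(G) that is simultaneously a dominating set of G and attains the maximum in the definition of the strong differential, i.e., D is a dominating set with ∂_s(D) = ∂_s(G). -/
open Finset

namespace StrongDifferential

variable {V : Type*} [Fintype V] [DecidableEq V] (G : SimpleGraph V) [DecidableRel G.Adj]

/-- The external neighbourhood `N_e(D)` of a set `D`: vertices outside `D`
with a neighbour in `D`. -/
def extNbhd (D : Finset V) : Finset V :=
  univ.filter fun u => u ∉ D ∧ ∃ v ∈ D, G.Adj u v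

/-- The external private neighbourhood `epn(v, D)` of `v` with respect to `D`. -/
def epn (v : V) (D : Finset V) : Finset V :=
  univ.filter fun u => u ∉ D ∧ G.neighborFinset u ∩ D = {v}

/-- `D_w`: the vertices of `D` having a nonempty external private neighbourhood. -/
def weak (D : Finset V) : Finset V :=
  D.filter fun v => (epn G v D).Nonempty

/-- `D_s = D \ D_w`. -/
def strong (D : Finset V) : Finset V :=
  D \ weak G D

/-- The strong differential `∂ₛ(D) = |N_e(D)| - |D_w|` of a set `D`. -/
def sdiffSet (D : Finset V) : ℤ :=
  (extNbhd G D).card - (weak G D).card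

/-- The strong differential `∂ₛ(G) = max {∂ₛ(D) : D ⊆ V(G)}` of the graph `G`. -/
def sdiff : ℤ :=
  (univ : Finset V).powerset.sup' ⟨∅, empty_mem_powerset _⟩ (sdiffSet G)

/-- The differential `∂(D) = |N_e(D)| - |D|` of a set `D`. -/
def diffSet (D : Finset V) : ℤ :=
  (extNbhd G D).card - D.card

/-- The differential `∂(G) = max {∂(D) : D ⊆ V(G)}` of the graph `G`. -/
def gdiff : ℤ :=
  (univ : Finset V).powerset.sup' ⟨∅, empty_mem_powerset _⟩ (diffSet G)

/-- A dominating set: every vertex outside `D` has a neighbour in `D`. -/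
def IsDomSet (D : Finset V) : Prop :=
  ∀ v, v ∉ D → ∃ u ∈ D, G.Adj v u

/-- The domination number `γ(G)`. -/
noncomputable def gamma : ℕ :=
  sInf {k | ∃ D : Finset V, IsDomSet G D ∧ D.card = k}

/-- A 2-dominating set: every vertex outside `D` has at least two neighbours in `D`. -/
def Is2DomSet (D : Finset V) : Prop :=
  ∀ v, v ∉ D → 2 ≤ (G.neighborFinset v ∩ D).card

/-- The 2-domination number `γ₂(G)`. -/
noncomputable def gamma2 : ℕ :=
  sInf {k | ∃ D : Finset V, Is2DomSet G D ∧ D.card = k}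

/-- An Italian dominating function: `f : V → {0,1,2}` such that every
vertex of weight `0` has total weight at least `2` on its neighbourhood. -/
def IsIDF (f : V → ℕ) : Prop :=
  (∀ v, f v ≤ 2) ∧ ∀ v, f v = 0 → 2 ≤ ∑ u ∈ G.neighborFinset v, f u

/-- The Italian domination number `γ_I(G)`. -/
noncomputable def italian : ℕ :=
  sInf {k | ∃ f : V → ℕ, IsIDF G f ∧ ∑ v, f v = k}

/-- `σ(G)`: the number of vertices adjacent to at least two leaves. -/
def sigmaSupp : ℕ :=
  (univ.filter fun v => 2 ≤ ((G.neighborFinset v).filter fun u => G.degree u = 1).card).card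

/-- The independence number `α(G)`. -/
noncomputable def indepNum : ℕ :=
  sSup {k | ∃ S : Finset V, (∀ u ∈ S, ∀ w ∈ S, u ≠ w → ¬ G.Adj u w) ∧ S.card = k}

/-- The vertex cover number `β(G)`. -/
noncomputable def vcNum : ℕ :=
  sInf {k | ∃ S : Finset V, (∀ u v, G.Adj u v → u ∈ S ∨ v ∈ S) ∧ S.card = k}

/-- A semitotal dominating set: a dominating set in which every vertex is
within distance two of another vertex of the set. -/
def IsSemitotalDomSet (D : Finset V) : Prop :=
  IsDomSet G D ∧ ∀ v ∈ D, ∃ u ∈ D, u ≠ v ∧ (G.Adj v u ∨ ∃ w, G.Adj v w ∧ G.Adj w u)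

/-- The semitotal domination number `γ_{t2}(G)`. -/
noncomputable def gammaT2 : ℕ :=
  sInf {k | ∃ D : Finset V, IsSemitotalDomSet G D ∧ D.card = k}

lemma key_insert {V : Type*} [Fintype V] [DecidableEq V] (G : SimpleGraph V)
    [DecidableRel G.Adj] (D : Finset V) (v : V) (hv : v ∉ D)
    (hnd : ∀ u ∈ D, ¬ G.Adj v u) :
    sdiffSet G D ≤ sdiffSet G (insert v D) := by
  set D' := insert v D with hD'
  have hsubE : extNbhd G D ⊆ extNbhd G D' := by
    intro u hu
    simp only [extNbhd, mem_filter, mem_univ, true_and] at hu ⊢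
    obtain ⟨huD, w, hwD, hadj⟩ := hu
    refine ⟨?_, w, mem_insert_of_mem hwD, hadj⟩
    intro h
    rcases mem_insert.mp h with rfl | h
    · exact hnd w hwD hadj
    · exact huD h
  have hsubW : weak G D' ⊆ insert v (weak G D) := by
    intro w hw
    simp only [weak, mem_filter] at hw
    obtain ⟨hwD', u, hu⟩ := hw
    rcases mem_insert.mp hwD' with rfl | hwD
    · exact mem_insert_self _ _
    · refine mem_insert_of_mem ?_
      simp only [weak, mem_filter]
      refine ⟨hwD, u, ?_⟩
      simp only [epn, mem_filter, mem_univ, true_and] at hu ⊢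
      obtain ⟨huD', heq⟩ := hu
      constructor
      · exact fun h => huD' (mem_insert_of_mem h)
      · apply subset_antisymm
        · intro x hx
          have hx' : x ∈ G.neighborFinset u ∩ D' :=
            mem_inter.mpr ⟨(mem_inter.mp hx).1, mem_insert_of_mem (mem_inter.mp hx).2⟩
          rw [heq] at hx'; exact hx'
        · intro x hx
          rw [mem_singleton] at hx; subst hx
          have hw' : x ∈ G.neighborFinset u ∩ D' := heq ▸ mem_singleton_self x
          exact mem_inter.mpr ⟨(mem_inter.mp hw').1, hwD⟩
  unfold sdiffSet
  by_cases hvw : v ∈ weak G D'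
  · simp only [weak, mem_filter] at hvw
    obtain ⟨_, u, hu⟩ := hvw
    simp only [epn, mem_filter, mem_univ, true_and] at hu
    obtain ⟨huD', heq⟩ := hu
    have hvN : v ∈ G.neighborFinset u := by
      have : v ∈ G.neighborFinset u ∩ D' := heq ▸ mem_singleton_self v
      exact (mem_inter.mp this).1
    have huE' : u ∈ extNbhd G D' := by
      simp only [extNbhd, mem_filter, mem_univ, true_and]
      exact ⟨huD', v, mem_insert_self _ _, (SimpleGraph.mem_neighborFinset _ _ _).mp hvN⟩
    have huE : u ∉ extNbhd G D := by
      simp only [extNbhd, mem_filter, mem_univ, true_and, not_and, not_exists]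
      intro _ w hwD hadj
      have : w ∈ G.neighborFinset u ∩ D' :=
        mem_inter.mpr ⟨(SimpleGraph.mem_neighborFinset _ _ _).mpr hadj,
          mem_insert_of_mem hwD⟩
      rw [heq, mem_singleton] at this
      exact hv (this ▸ hwD)
    have h1 : (extNbhd G D).card + 1 ≤ (extNbhd G D').card := by
      have : insert u (extNbhd G D) ⊆ extNbhd G D' := by
        intro x hx
        rcases mem_insert.mp hx with rfl | hx
        · exact huE'
        · exact hsubE hx
      calc (extNbhd G D).card + 1 = (insert u (extNbhd G D)).card :=
            (card_insert_of_notMem huE).symm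
        _ ≤ (extNbhd G D').card := card_le_card this
    have h2 : (weak G D').card ≤ (weak G D).card + 1 :=
      le_trans (card_le_card hsubW) (card_insert_le _ _)
    omega
  · have hsubW' : weak G D' ⊆ weak G D := by
      intro w hw
      rcases mem_insert.mp (hsubW hw) with rfl | h
      · exact absurd hw hvw
      · exact h
    have h1 : (extNbhd G D).card ≤ (extNbhd G D').card := card_le_card hsubE
    have h2 : (weak G D').card ≤ (weak G D).card := card_le_card hsubW'
    omega

theorem stmt_0 {V : Type*} [Fintype V] [DecidableEq V] (G : SimpleGraph V)
    [DecidableRel G.Adj] :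
    ∃ D : Finset V, IsDomSet G D ∧ sdiffSet G D = sdiff G := by
  classical
  obtain ⟨D0, hD0mem, hD0⟩ :=
    Finset.exists_mem_eq_sup' (⟨∅, empty_mem_powerset _⟩ :
      ((univ : Finset V).powerset).Nonempty) (sdiffSet G)
  have hne : ((univ : Finset V).powerset.filter fun D => sdiffSet G D = sdiff G).Nonempty :=
    ⟨D0, mem_filter.mpr ⟨hD0mem, hD0.symm⟩⟩
  obtain ⟨D, hDmem, hDmax⟩ := Finset.exists_max_image _ Finset.card hne
  obtain ⟨_, hDeq⟩ := mem_filter.mp hDmem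
  refine ⟨D, ?_, hDeq⟩
  intro v hvD
  by_contra hcon
  push_neg at hcon
  have hkey := key_insert G D v hvD hcon
  have hle : sdiffSet G (insert v D) ≤ sdiff G :=
    Finset.le_sup' (sdiffSet G) (mem_powerset.mpr (subset_univ _))
  have heq' : sdiffSet G (insert v D) = sdiff G := le_antisymm hle (hDeq ▸ hkey)
  have hmem' : insert v D ∈
      ((univ : Finset V).powerset.filter fun D => sdiffSet G D = sdiff G) :=
    mem_filter.mpr ⟨mem_powerset.mpr (subset_univ _), heq'⟩
  have := hDmax _ hmem'
  rw [card_insert_of_notMem hvD] at this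
  omega

end StrongDifferential
end

section
/- For any finite simple graph G, γ_I(G) + ∂_s(G) = n(G), where n(G) is the order of G (a Gallai-type identity relating the Italian domination number and the strong differential). -/
open Finset

namespace StrongDifferential

variable {V : Type*} [Fintype V] [DecidableEq V] (G : SimpleGraph V) [DecidableRel G.Adj]

/-- From any set `D` one can construct an Italian dominating function of
weight `n - ∂ₛ(D)`. -/
lemma exists_idf_of_set (D : Finset V) : ∃ f : V → ℕ, IsIDF G f ∧
    (∑ v, (f v : ℤ)) = Fintype.card V - sdiffSet G D := by
  classical
  set W := weak G D with hW
  set E := extNbhd G D with hEdef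
  have hWD : W ⊆ D := filter_subset _ _
  have hED : ∀ u ∈ E, u ∉ D := fun u hu => (mem_filter.mp hu).2.1
  refine ⟨fun u => if u ∈ W then 2 else if u ∈ E then 0 else 1, ⟨?_, ?_⟩, ?_⟩
  · intro v; dsimp only; split_ifs <;> omega
  · intro v hv
    dsimp only at hv ⊢
    have hvW : v ∉ W := by intro h; simp [h] at hv
    have hvE : v ∈ E := by by_contra h; simp [hvW, h] at hv
    obtain ⟨-, hvD, w, hwD, hadj⟩ := mem_filter.mp hvE
    set S := G.neighborFinset v ∩ D with hS
    have hwS : w ∈ S := mem_inter.mpr ⟨(G.mem_neighborFinset v w).mpr hadj, hwD⟩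
    have h1 : 1 ≤ S.card := card_pos.mpr ⟨w, hwS⟩
    rcases eq_or_lt_of_le h1 with h1 | h2
    · -- exactly one neighbour in D, which is then a weak vertex
      obtain ⟨x, hx⟩ := card_eq_one.mp h1.symm
      have hxS : x ∈ S := hx ▸ mem_singleton_self x
      have hxD : x ∈ D := (mem_inter.mp hxS).2
      have hxN : x ∈ G.neighborFinset v := (mem_inter.mp hxS).1
      have hvepn : v ∈ epn G x D := by
        simp only [epn, mem_filter, mem_univ, true_and]
        exact ⟨hvD, hx⟩
      have hxW : x ∈ W := mem_filter.mpr ⟨hxD, ⟨v, hvepn⟩⟩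
      calc (2 : ℕ) = (if x ∈ W then 2 else if x ∈ E then 0 else 1) := by
            simp [hxW]
        _ ≤ ∑ u ∈ G.neighborFinset v, (if u ∈ W then 2 else if u ∈ E then 0 else 1) :=
            Finset.single_le_sum
              (f := fun u => if u ∈ W then 2 else if u ∈ E then 0 else 1)
              (fun i _ => Nat.zero_le _) hxN
    · -- at least two neighbours in D, each of weight at least one
      have hone : ∀ u ∈ S, 1 ≤ (if u ∈ W then 2 else if u ∈ E then 0 else 1) := by
        intro u hu
        have huD : u ∈ D := (mem_inter.mp hu).2
        have huE : u ∉ E := fun h => hED u h huD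
        split_ifs <;> omega
      calc (2 : ℕ) ≤ S.card := h2
        _ = ∑ u ∈ S, 1 := by simp
        _ ≤ ∑ u ∈ S, (if u ∈ W then 2 else if u ∈ E then 0 else 1) :=
            Finset.sum_le_sum hone
        _ ≤ ∑ u ∈ G.neighborFinset v, (if u ∈ W then 2 else if u ∈ E then 0 else 1) :=
            Finset.sum_le_sum_of_subset (inter_subset_left)
  · -- the weight computation
    have key : ∀ v : V, ((if v ∈ W then 2 else if v ∈ E then 0 else 1 : ℕ) : ℤ)
        = 1 + (if v ∈ W then (1 : ℤ) else 0) - (if v ∈ E then (1 : ℤ) else 0) := by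
      intro v
      by_cases h1 : v ∈ W
      · have h2 : v ∉ E := fun h => hED v h (hWD h1)
        simp [h1, h2]
      · by_cases h2 : v ∈ E <;> simp [h1, h2]
    calc (∑ v, ((if v ∈ W then 2 else if v ∈ E then 0 else 1 : ℕ) : ℤ))
        = ∑ v : V, (1 + (if v ∈ W then (1 : ℤ) else 0) - (if v ∈ E then (1 : ℤ) else 0)) :=
          Finset.sum_congr rfl fun v _ => key v
      _ = (Fintype.card V : ℤ) + W.card - E.card := by
          rw [Finset.sum_sub_distrib, Finset.sum_add_distrib]
          simp [Finset.sum_ite_mem, Finset.card_univ]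
      _ = Fintype.card V - sdiffSet G D := by
          simp only [sdiffSet, ← hW, ← hEdef]; ring

/-- From an Italian dominating function `f` one gets a set whose strong
differential is at least `n - w(f)`. -/
lemma sdiff_ge_of_idf (f : V → ℕ) (hf : IsIDF G f) :
    (Fintype.card V : ℤ) - ∑ v, (f v : ℤ) ≤ sdiff G := by
  classical
  set D : Finset V := univ.filter (fun v => f v ≠ 0) with hD
  have hmemD : ∀ v, v ∈ D ↔ f v ≠ 0 := by intro v; simp [hD]
  -- every vertex outside `D` lies in the external neighbourhood of `D`
  have hext : extNbhd G D = univ \ D := by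
    ext u
    simp only [extNbhd, mem_filter, mem_univ, true_and, mem_sdiff]
    constructor
    · intro h; exact h.1
    · intro h
      refine ⟨h, ?_⟩
      have hu0 : f u = 0 := by
        by_contra h0; exact h ((hmemD u).mpr h0)
      have h2 : 2 ≤ ∑ w ∈ G.neighborFinset u, f w := hf.2 u hu0
      have : ∃ w ∈ G.neighborFinset u, f w ≠ 0 := by
        by_contra hall
        push_neg at hall
        have : ∑ w ∈ G.neighborFinset u, f w = 0 :=
          Finset.sum_eq_zero fun w hw => hall w hw
        omega
      obtain ⟨w, hwN, hw0⟩ := this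
      exact ⟨w, (hmemD w).mpr hw0, (G.mem_neighborFinset u w).mp hwN⟩
  -- every weak vertex has weight 2
  have hweak2 : ∀ v ∈ weak G D, f v = 2 := by
    intro v hv
    obtain ⟨hvD, u, hu⟩ := mem_filter.mp hv
    obtain ⟨-, huD, huN⟩ := mem_filter.mp hu
    have hu0 : f u = 0 := by
      by_contra h0; exact huD ((hmemD u).mpr h0)
    have h2 : 2 ≤ ∑ w ∈ G.neighborFinset u, f w := hf.2 u hu0
    have hsplit : ∑ w ∈ G.neighborFinset u, f w = f v := by
      rw [← Finset.sum_inter_add_sum_sdiff (G.neighborFinset u) D f, huN]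
      have : ∑ w ∈ G.neighborFinset u \ D, f w = 0 := by
        refine Finset.sum_eq_zero fun w hw => ?_
        have := (mem_sdiff.mp hw).2
        by_contra h0; exact this ((hmemD w).mpr h0)
      rw [this, Finset.sum_singleton, add_zero]
    have := hf.1 v
    omega
  have hWsub : weak G D ⊆ D := filter_subset _ _
  -- the weight bound : ∑ f ≥ |D| + |weak D|
  have hwt : (D.card : ℤ) + (weak G D).card ≤ ∑ v, (f v : ℤ) := by
    have h1 : ∑ v ∈ D, (f v : ℤ) ≤ ∑ v, (f v : ℤ) :=
      Finset.sum_le_sum_of_subset_of_nonneg (subset_univ D)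
        (fun i _ _ => by positivity)
    have h2 : ∑ v ∈ D, (f v : ℤ)
        = ∑ v ∈ weak G D, (f v : ℤ) + ∑ v ∈ D \ weak G D, (f v : ℤ) :=
      (Finset.sum_sdiff hWsub).symm.trans (add_comm _ _)
    have h3 : ∑ v ∈ weak G D, (f v : ℤ) = 2 * (weak G D).card := by
      rw [Finset.sum_congr rfl fun v hv => by rw [hweak2 v hv]]
      simp [mul_comm]
    have h4 : ((D \ weak G D).card : ℤ) ≤ ∑ v ∈ D \ weak G D, (f v : ℤ) := by
      calc ((D \ weak G D).card : ℤ) = ∑ _v ∈ D \ weak G D, (1 : ℤ) := by simp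
        _ ≤ ∑ v ∈ D \ weak G D, (f v : ℤ) := by
            refine Finset.sum_le_sum fun v hv => ?_
            have hvD : v ∈ D := (mem_sdiff.mp hv).1
            have : f v ≠ 0 := (hmemD v).mp hvD
            exact_mod_cast Nat.one_le_iff_ne_zero.mpr this
    have h5 : ((D \ weak G D).card : ℤ) = D.card - (weak G D).card := by
      rw [Finset.card_sdiff_of_subset hWsub]
      have := Finset.card_le_card hWsub
      omega
    omega
  have hcardE : ((extNbhd G D).card : ℤ) = Fintype.card V - D.card := by
    rw [hext, Finset.card_sdiff_of_subset (subset_univ D), Finset.card_univ]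
    have := Finset.card_le_card (subset_univ D)
    rw [Finset.card_univ] at this
    omega
  have hstep : (Fintype.card V : ℤ) - ∑ v, (f v : ℤ) ≤ sdiffSet G D := by
    simp only [sdiffSet, hcardE]
    omega
  refine hstep.trans ?_
  exact Finset.le_sup' (sdiffSet G) (mem_powerset.mpr (subset_univ D))

theorem stmt_1 {V : Type*} [Fintype V] [DecidableEq V] (G : SimpleGraph V)
    [DecidableRel G.Adj] :
    (italian G : ℤ) + sdiff G = Fintype.card V := by
  classical
  have hne : {k | ∃ f : V → ℕ, IsIDF G f ∧ ∑ v, f v = k}.Nonempty :=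
    ⟨∑ _v : V, 2, fun _ => 2, ⟨fun _ => le_refl 2, fun v h => by simp at h⟩, rfl⟩
  -- a minimiser of the Italian domination number
  obtain ⟨f₀, hf₀, hsum₀⟩ := Nat.sInf_mem hne
  have hit : italian G = ∑ v, f₀ v := hsum₀.symm
  have hge : (Fintype.card V : ℤ) - italian G ≤ sdiff G := by
    have := sdiff_ge_of_idf G f₀ hf₀
    rw [← Nat.cast_sum] at this
    rw [hit]
    exact this
  -- a maximiser of the strong differential
  obtain ⟨D, -, hDmax⟩ := Finset.exists_mem_eq_sup' (⟨∅, empty_mem_powerset _⟩ :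
    ((univ : Finset V).powerset).Nonempty) (sdiffSet G)
  obtain ⟨f, hf, hfsum⟩ := exists_idf_of_set G D
  have hle : (italian G : ℤ) ≤ Fintype.card V - sdiff G := by
    have hval : (italian G : ℤ) ≤ ∑ v, (f v : ℤ) := by
      have : italian G ≤ ∑ v, f v := Nat.sInf_le ⟨f, hf, rfl⟩
      rw [← Nat.cast_sum]
      exact_mod_cast this
    rw [hfsum] at hval
    have hsd : sdiff G = sdiffSet G D := hDmax
    rw [hsd]
    exact hval
  linarith

end StrongDifferential
end

section
/- If G is a connected finite simple graph with n(G) ≥ 3, then ∂_s(G) ≥ n(G)/4, i.e., 4·∂_s(G) ≥ n(G). -/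
open Finset

namespace StrongDifferential

variable {V : Type*} [Fintype V] [DecidableEq V] (G : SimpleGraph V) [DecidableRel G.Adj]

/-!
If `f` is an Italian dominating function (every vertex of weight `0` sees weight at least `2`)
with support `D`, then `D` dominates `G` and every vertex of `D_w` has weight at least `2`, since
it is the only weighted neighbour of its private neighbour; hence `∂ₛ(D) ≥ n - w(f)`. So it
suffices to find an Italian dominating function of weight at most `3n/4`.

For this, layer the graph breadth-first from a root and cut off a spider at the bottom: either a
vertex of the second deepest layer with at least two children (weight `2` on it), or the
grandparent of a deepest vertex with its children and grandchildren (weight `1` or `2` on it and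
`1` on each grandchild). Its weight is at most `3/4` of its size, and the rest of the graph is
again layered from the same root. If the rest has at most two vertices, it is covered cheaply
because one of its vertices is adjacent to the centre of the spider.
-/

section Grading

variable {V : Type*} (G : SimpleGraph V)

/-- A breadth-first layering of `S` from `r`: every other vertex of `S` has a neighbour in `S`
one layer closer to `r`. The root `r` need not lie in `S`. -/
structure IsGrading (S : Finset V) (r : V) (δ : V → ℕ) : Prop where
  depth_root : δ r = 0
  exists_parent : ∀ v ∈ S, v ≠ r → ∃ y ∈ S, G.Adj v y ∧ δ y + 1 = δ v

def children [DecidableRel G.Adj] (S : Finset V) (δ : V → ℕ) (y : V) : Finset V :=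
  {v ∈ S | G.Adj v y ∧ δ y + 1 = δ v}

variable {G}

namespace IsGrading

variable {S : Finset V} {r : V} {δ : V → ℕ}

lemma eq_root (hS : IsGrading G S r δ) {v : V} (hv : v ∈ S) (h0 : δ v = 0) : v = r := by
  by_contra hvr
  obtain ⟨y, -, -, hy⟩ := hS.exists_parent v hv hvr
  omega

lemma eq_empty_of_root_notMem (hS : IsGrading G S r δ) (hr : r ∉ S) : S = ∅ := by
  by_contra hne
  obtain ⟨v, hv, hmin⟩ := S.exists_min_image δ (nonempty_iff_ne_empty.mpr hne)
  obtain ⟨y, hy, -, hyv⟩ := hS.exists_parent v hv (ne_of_mem_of_not_mem hv hr)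
  have := hmin y hy
  omega

lemma adj_of_eq_pair [DecidableEq V] (hS : IsGrading G S r δ) {x y : V} (hxy : x ≠ y)
    (hSxy : S = {x, y}) : G.Adj x y := by
  subst hSxy
  by_cases hxr : x = r
  · obtain ⟨z, hz, hyz, -⟩ := hS.exists_parent y (by simp) (hxr ▸ hxy.symm)
    rcases mem_insert.mp hz with rfl | hz
    · exact hyz.symm
    · rw [mem_singleton.mp hz] at hyz
      exact absurd hyz (G.loopless.irrefl y)
  · obtain ⟨z, hz, hxz, -⟩ := hS.exists_parent x (by simp) hxr
    rcases mem_insert.mp hz with rfl | hz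
    · exact absurd hxz (G.loopless.irrefl z)
    · rwa [mem_singleton.mp hz] at hxz

lemma sdiff [DecidableEq V] [DecidableRel G.Adj] (hS : IsGrading G S r δ) {W : Finset V}
    (hW : ∀ y ∈ W, children G S δ y ⊆ W) : IsGrading G (S \ W) r δ := by
  refine ⟨hS.depth_root, fun v hv hvr => ?_⟩
  obtain ⟨hvS, hvW⟩ := mem_sdiff.mp hv
  obtain ⟨y, hyS, hvy, hyv⟩ := hS.exists_parent v hvS hvr
  refine ⟨y, mem_sdiff.mpr ⟨hyS, fun hyW => hvW ?_⟩, hvy, hyv⟩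
  exact hW y hyW (mem_filter.mpr ⟨hvS, hvy, hyv⟩)

end IsGrading

lemma children_eq_empty [DecidableRel G.Adj] {S : Finset V} {δ : V → ℕ} {y : V}
    (hmax : ∀ v ∈ S, δ v ≤ δ y) : children G S δ y = ∅ :=
  filter_false_of_mem fun v hv ⟨_, hyv⟩ => by have := hmax v hv; omega

lemma isGrading_dist [Fintype V] (hconn : G.Connected) (r : V) :
    IsGrading G univ r (G.dist · r) := by
  refine ⟨SimpleGraph.dist_self, fun v _ hvr => ?_⟩
  obtain ⟨p, hp⟩ := hconn.exists_walk_length_eq_dist v r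
  cases p with
  | nil => exact absurd rfl hvr
  | cons hadj q =>
    obtain ⟨q', hq'⟩ := hconn.exists_walk_length_eq_dist _ r
    refine ⟨_, mem_univ _, hadj, ?_⟩
    have h1 := SimpleGraph.dist_le q
    have h2 := SimpleGraph.dist_le (.cons hadj q')
    simp only [SimpleGraph.Walk.length_cons] at hp h2
    omega

end Grading

section ItalianBound

variable {V : Type*} (G : SimpleGraph V) [DecidableRel G.Adj]

/-- `f` is an Italian dominating function of `G[S]` when every `v ∈ S` is additionally
assumed to see weight `e v` from outside `S`. -/
def IsItalianOn (S : Finset V) (e f : V → ℕ) : Prop :=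
  ∀ v ∈ S, f v = 0 → 2 ≤ e v + ∑ y ∈ S with G.Adj v y, f y

def HasLightItalian (S : Finset V) : Prop :=
  ∃ f : V → ℕ, IsItalianOn G S 0 f ∧ 4 * ∑ v ∈ S, f v ≤ 3 * #S

variable {G} [DecidableEq V]

lemma IsItalianOn.piecewise {W R : Finset V} {e fW fR : V → ℕ} (hWR : Disjoint W R)
    (hW : IsItalianOn G W 0 fW) (hR : IsItalianOn G R e fR)
    (he : ∀ v ∈ R, e v ≤ ∑ y ∈ W with G.Adj v y, fW y) :
    IsItalianOn G (W ∪ R) 0 (W.piecewise fW fR) := by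
  intro v hv hfv
  have hsplit : ∑ y ∈ W ∪ R with G.Adj v y, W.piecewise fW fR y =
      ∑ y ∈ W with G.Adj v y, fW y + ∑ y ∈ R with G.Adj v y, fR y := by
    rw [filter_union, sum_union (disjoint_filter_filter hWR)]
    congr 1
    · exact sum_congr rfl fun y hy => piecewise_eq_of_mem _ _ _ (mem_filter.mp hy).1
    · exact sum_congr rfl fun y hy =>
        piecewise_eq_of_notMem _ _ _ (disjoint_right.mp hWR (mem_filter.mp hy).1)
  rw [Pi.zero_apply, zero_add, hsplit]
  rcases mem_union.mp hv with hvW | hvR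
  · rw [piecewise_eq_of_mem _ _ _ hvW] at hfv
    simpa using (hW v hvW hfv).trans (Nat.le_add_right _ _)
  · rw [piecewise_eq_of_notMem _ _ _ (disjoint_right.mp hWR hvR)] at hfv
    exact (hR v hvR hfv).trans (Nat.add_le_add_right (he v hvR) _)

lemma sum_piecewise_of_disjoint {W R : Finset V} (hWR : Disjoint W R) (f g : V → ℕ) :
    ∑ v ∈ W ∪ R, W.piecewise f g v = ∑ v ∈ W, f v + ∑ v ∈ R, g v := by
  rw [sum_union hWR]
  congr 1
  · exact sum_congr rfl fun v hv => piecewise_eq_of_mem _ _ _ hv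
  · exact sum_congr rfl fun v hv => piecewise_eq_of_notMem _ _ _ (disjoint_right.mp hWR hv)

lemma isItalianOn_spider {W L : Finset V} {g : V} {a : ℕ} (hg : g ∈ W) (hLW : L ⊆ W)
    (ha : 1 ≤ a)
    (hW : ∀ v ∈ W, v = g ∨ v ∈ L ∨ G.Adj v g ∧ (2 ≤ a ∨ ∃ x ∈ L, G.Adj v x)) :
    IsItalianOn G W 0 fun v => (if v = g then a else 0) + if v ∈ L then 1 else 0 := by
  intro v hv hfv
  rcases hW v hv with rfl | hvL | ⟨hvg, hcov⟩
  · simp at hfv; omega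
  · simp [hvL] at hfv
  set f : V → ℕ := fun v => (if v = g then a else 0) + if v ∈ L then 1 else 0
  have hgN : g ∈ W.filter (G.Adj v) := mem_filter.mpr ⟨hg, hvg⟩
  have hfg : a ≤ f g := by simp [f]
  rw [Pi.zero_apply, zero_add]
  rcases hcov with h2 | ⟨x, hxL, hvx⟩
  · exact (h2.trans hfg).trans (single_le_sum (fun _ _ => Nat.zero_le _) hgN)
  · have hfx : 1 ≤ f x := by simp [f, hxL]
    by_cases hxg : x = g
    · subst hxg
      have : a + 1 ≤ f x := by simp [f, hxL]
      exact (by omega : 2 ≤ f x).trans (single_le_sum (fun _ _ => Nat.zero_le _) hgN)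
    · have hxN : x ∈ W.filter (G.Adj v) := mem_filter.mpr ⟨hLW hxL, hvx⟩
      exact (by omega : 2 ≤ f g + f x).trans
        (add_le_sum (fun _ _ => Nat.zero_le _) hgN hxN (Ne.symm hxg))

lemma sum_spider {W L : Finset V} {g : V} (a : ℕ) (hg : g ∈ W) (hLW : L ⊆ W) :
    ∑ v ∈ W, ((if v = g then a else 0) + if v ∈ L then 1 else 0) = a + #L := by
  rw [sum_add_distrib, sum_ite_eq' W g, if_pos hg, sum_boole, filter_mem_eq_inter,
    inter_eq_right.mpr hLW, Nat.cast_id]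

variable {S : Finset V} {r : V} {δ : V → ℕ}

/-- Pieces of size at most two are paid for by the `+ 2`. -/
lemma exists_italianOn_remainder (hS : IsGrading G S r δ) (hIH : 3 ≤ #S → HasLightItalian G S)
    {h : V} (hhS : h ∈ S) {a : ℕ} (ha : 1 ≤ a) (ha2 : a ≤ 2) :
    ∃ f, IsItalianOn G S (fun v => if v = h then a else 0) f ∧
      4 * ∑ v ∈ S, f v + a ≤ 3 * #S + 2 := by
  obtain h1 | h2 | h3 : #S = 1 ∨ #S = 2 ∨ 3 ≤ #S := by
    have := card_pos.mpr ⟨h, hhS⟩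
    omega
  · obtain ⟨x, rfl⟩ := card_eq_one.mp h1
    obtain rfl := mem_singleton.mp hhS
    refine ⟨fun v => if v = h then 2 - a else 0, fun v hv hfv => ?_, by simp; omega⟩
    obtain rfl := mem_singleton.mp hv
    simp only [if_true] at hfv ⊢
    omega
  · obtain ⟨x, y, hxy, hSxy⟩ := card_eq_two.mp h2
    obtain ⟨b, hhb, hSb⟩ : ∃ b, h ≠ b ∧ S = {h, b} := by
      rw [hSxy] at hhS ⊢
      rcases mem_insert.mp hhS with rfl | hy
      · exact ⟨y, hxy, rfl⟩
      · rw [mem_singleton.mp hy]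
        exact ⟨x, hxy.symm, pair_comm x y⟩
    have hbN : b ∈ {y ∈ S | G.Adj h y} :=
      mem_filter.mpr ⟨by simp [hSb], hS.adj_of_eq_pair hhb hSb⟩
    refine ⟨fun v => if v = b then 1 else 0, fun v hv hfv => ?_, ?_⟩
    · have hvb : v ≠ b := by rintro rfl; simp at hfv
      obtain rfl : v = h := by simpa [hSb, hvb] using hv
      have := single_le_sum (f := fun v => if v = b then 1 else 0) (fun _ _ => Nat.zero_le _) hbN
      simp only [if_true] at this ⊢
      omega
    · rw [sum_ite_eq' S b, if_pos (by simp [hSb])]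
      omega
  · obtain ⟨f, hf, hw⟩ := hIH h3
    refine ⟨f, fun v hv hfv => (hf v hv hfv).trans (Nat.add_le_add_right (Nat.zero_le _) _), ?_⟩
    omega

lemma HasLightItalian.of_split
    (IH : ∀ T ⊂ S, IsGrading G T r δ → 3 ≤ #T → HasLightItalian G T)
    {W : Finset V} (hWS : W ⊆ S) (hW : W.Nonempty) (hR : IsGrading G (S \ W) r δ)
    {fW : V → ℕ} (hfW : IsItalianOn G W 0 fW) {a : ℕ} (ha : 1 ≤ a) (ha2 : a ≤ 2)
    (hh : S \ W = ∅ ∨ ∃ h ∈ S \ W, a ≤ ∑ y ∈ W with G.Adj h y, fW y)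
    (hweight : 4 * ∑ v ∈ W, fW v + 2 ≤ 3 * #W + a) : HasLightItalian G S := by
  rcases hh with hR0 | ⟨h, hhR, hah⟩
  · rw [(sdiff_eq_empty_iff_subset.mp hR0).antisymm hWS]
    exact ⟨fW, hfW, by omega⟩
  obtain ⟨fR, hfR, hwR⟩ :=
    exists_italianOn_remainder hR (IH _ (sdiff_ssubset hWS hW) hR) hhR ha ha2
  have hWR : Disjoint W (S \ W) := disjoint_sdiff
  refine ⟨W.piecewise fW fR, ?_, ?_⟩
  · rw [← union_sdiff_of_subset hWS]
    refine hfW.piecewise hWR hfR fun v _ => ?_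
    split_ifs with hvh
    · exact hvh ▸ hah
    · exact Nat.zero_le _
  · have hsum : ∑ v ∈ S, W.piecewise fW fR v = ∑ v ∈ W, fW v + ∑ v ∈ S \ W, fR v := by
      rw [← sum_piecewise_of_disjoint hWR, union_sdiff_of_subset hWS]
    have hcard := card_sdiff_add_card_eq_card hWS
    omega

lemma HasLightItalian.of_spider (hS : IsGrading G S r δ)
    (IH : ∀ T ⊂ S, IsGrading G T r δ → 3 ≤ #T → HasLightItalian G T)
    {W L : Finset V} {g : V} {a : ℕ} (hWS : W ⊆ S) (hg : g ∈ W) (hLW : L ⊆ W)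
    (ha : 1 ≤ a) (ha2 : a ≤ 2)
    (hW : ∀ v ∈ W, v = g ∨ v ∈ L ∨ G.Adj v g ∧ (2 ≤ a ∨ ∃ x ∈ L, G.Adj v x))
    (hclosed : ∀ y ∈ W, children G S δ y ⊆ W)
    (hh : S \ W = ∅ ∨ ∃ h ∈ S \ W, G.Adj h g)
    (hweight : 4 * #L + 3 * a + 2 ≤ 3 * #W) : HasLightItalian G S := by
  refine HasLightItalian.of_split IH hWS ⟨g, hg⟩ (hS.sdiff hclosed)
    (isItalianOn_spider hg hLW ha hW) ha ha2
    (hh.imp_right fun ⟨h, hhR, hhg⟩ => ⟨h, hhR, ?_⟩)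
    (by rw [sum_spider a hg hLW]; omega)
  refine le_trans ?_ (single_le_sum (fun _ _ => Nat.zero_le _) (mem_filter.mpr ⟨hg, hhg⟩))
  simp

lemma hasLightItalian_of_depth_le_one (hS : IsGrading G S r δ) (h3 : 3 ≤ #S)
    (hmax : ∀ v ∈ S, δ v ≤ 1) : HasLightItalian G S := by
  have hr : r ∈ S := by
    by_contra hr
    rw [hS.eq_empty_of_root_notMem hr, card_empty] at h3
    omega
  refine ⟨_, isItalianOn_spider (L := ∅) (a := 2) hr (empty_subset _) one_le_two
    fun v hv => ?_, by rw [sum_spider 2 hr (empty_subset _), card_empty]; omega⟩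
  by_cases hvr : v = r
  · exact Or.inl hvr
  obtain ⟨y, hy, hvy, hyv⟩ := hS.exists_parent v hv hvr
  have := hmax v hv
  exact Or.inr (Or.inr ⟨hS.eq_root hy (by omega) ▸ hvy, Or.inl le_rfl⟩)

lemma hasLightItalian_of_two_le_card_children (hS : IsGrading G S r δ)
    (IH : ∀ T ⊂ S, IsGrading G T r δ → 3 ≤ #T → HasLightItalian G T)
    {q : V} (hq : q ∈ S)
    (hmax : ∀ v ∈ S, δ v ≤ δ q + 1) (hq1 : 1 ≤ δ q) (h2 : 2 ≤ #(children G S δ q)) :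
    HasLightItalian G S := by
  set C := children G S δ q
  have hC : ∀ c ∈ C, c ∈ S ∧ G.Adj c q ∧ δ q + 1 = δ c := fun c hc => mem_filter.mp hc
  have hqC : q ∉ C := fun hq => by have := (hC q hq).2.2; omega
  have hqr : q ≠ r := by rintro rfl; rw [hS.depth_root] at hq1; omega
  obtain ⟨h, hhS, hqh, hhq⟩ := hS.exists_parent q hq hqr
  refine HasLightItalian.of_spider hS IH (W := insert q C) (L := ∅) (a := 2)
    (insert_subset hq fun c hc => (hC c hc).1) (mem_insert_self q C) (empty_subset _)
    one_le_two le_rfl (fun v hv => ?_) (fun y hy => ?_) (Or.inr ⟨h, ?_, hqh.symm⟩) ?_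
  · rcases mem_insert.mp hv with rfl | hvC
    · exact Or.inl rfl
    · exact Or.inr (Or.inr ⟨(hC v hvC).2.1, Or.inl le_rfl⟩)
  · rcases mem_insert.mp hy with rfl | hyC
    · exact subset_insert y C
    · rw [children_eq_empty fun v hv => (hC y hyC).2.2 ▸ hmax v hv]
      exact empty_subset _
  · refine mem_sdiff.mpr ⟨hhS, fun hhW => ?_⟩
    rcases mem_insert.mp hhW with rfl | hhC
    · omega
    · have := (hC h hhC).2.2
      omega
  · rw [card_empty, card_insert_of_notMem hqC]
    omega

lemma card_biUnion_children_add_one_le {C : Finset V} {S : Finset V} {δ : V → ℕ}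
    (hle : ∀ c ∈ C, #(children G S δ c) ≤ 1) {c₀ : V} (hc₀ : c₀ ∈ C)
    (hc₀' : children G S δ c₀ = ∅) : #(C.biUnion (children G S δ)) + 1 ≤ #C := by
  have := card_biUnion_le_card_mul (C.erase c₀) (children G S δ) 1
    fun c hc => hle c (mem_of_mem_erase hc)
  rw [← insert_erase hc₀, biUnion_insert, hc₀', empty_union, card_insert_of_notMem
    (notMem_erase c₀ C)]
  omega

/-- Cut off the grandparent `g` of a deepest vertex with all its children and grandchildren. -/
lemma hasLightItalian_of_card_children_le_one (hS : IsGrading G S r δ)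
    (IH : ∀ T ⊂ S, IsGrading G T r δ → 3 ≤ #T → HasLightItalian G T)
    {u : V} (hu : u ∈ S)
    (hmax : ∀ v ∈ S, δ v ≤ δ u) (hu2 : 2 ≤ δ u)
    (hle : ∀ q ∈ S, δ q + 1 = δ u → #(children G S δ q) ≤ 1) : HasLightItalian G S := by
  have hne_root : ∀ v, 1 ≤ δ v → v ≠ r := by
    rintro v hv rfl
    rw [hS.depth_root] at hv
    omega
  obtain ⟨p, hp, hup, hpu⟩ := hS.exists_parent u hu (hne_root u (by omega))
  obtain ⟨g, hg, hpg, hgp⟩ := hS.exists_parent p hp (hne_root p (by omega))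
  set C := children G S δ g
  set L := C.biUnion (children G S δ)
  have hC : ∀ c ∈ C, c ∈ S ∧ G.Adj c g ∧ δ g + 1 = δ c := fun c hc => mem_filter.mp hc
  have hL : ∀ x ∈ L, x ∈ S ∧ δ x = δ u := fun x hx => by
    obtain ⟨c, hc, hx⟩ := mem_biUnion.mp hx
    obtain ⟨hxS, -, hcx⟩ := mem_filter.mp hx
    have := (hC c hc).2.2
    exact ⟨hxS, by omega⟩
  have hpC : p ∈ C := mem_filter.mpr ⟨hp, hpg, hgp⟩
  have huL : u ∈ L := mem_biUnion.mpr ⟨p, hpC, mem_filter.mpr ⟨hu, hup, hpu⟩⟩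
  have hLC : #L ≤ #C := by
    simpa using card_biUnion_le_card_mul C (children G S δ) 1
      fun c hc => hle c (hC c hc).1 (by have := (hC c hc).2.2; omega)
  have hgCL : g ∉ C ∪ L := by
    rw [mem_union, not_or]
    exact ⟨fun h => by have := (hC g h).2.2; omega, fun h => by have := (hL g h).2; omega⟩
  have hCL : Disjoint C L := disjoint_left.mpr fun x hxC hxL => by
    have := (hC x hxC).2.2; have := (hL x hxL).2; omega
  set W := insert g (C ∪ L)
  have hWcard : #W = #C + #L + 1 := by
    rw [card_insert_of_notMem hgCL, card_union_of_disjoint hCL]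
  have hclosed : ∀ y ∈ W, children G S δ y ⊆ W := by
    intro y hy
    rcases mem_insert.mp hy with rfl | hy
    · exact (subset_union_left).trans (subset_insert _ _)
    rcases mem_union.mp hy with hyC | hyL
    · exact (subset_biUnion_of_mem _ hyC).trans (subset_union_right.trans (subset_insert _ _))
    · rw [children_eq_empty fun v hv => (hL y hyL).2 ▸ hmax v hv]
      exact empty_subset _
  obtain ⟨a, ha1, ha2, hcov, hweight⟩ : ∃ a, 1 ≤ a ∧ a ≤ 2 ∧
      (2 ≤ a ∨ ∀ c ∈ C, ∃ x ∈ L, G.Adj c x) ∧ 4 * #L + 3 * a + 2 ≤ 3 * #W := by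
    by_cases hall : ∀ c ∈ C, (children G S δ c).Nonempty
    · have := card_pos.mpr ⟨p, hpC⟩
      refine ⟨1, le_rfl, one_le_two, Or.inr fun c hc => ?_, by omega⟩
      obtain ⟨x, hx⟩ := hall c hc
      exact ⟨x, mem_biUnion.mpr ⟨c, hc, hx⟩, (mem_filter.mp hx).2.1.symm⟩
    · push Not at hall
      obtain ⟨c₀, hc₀, hc₀'⟩ := hall
      have : #L + 1 ≤ #C := card_biUnion_children_add_one_le
        (fun c hc => hle c (hC c hc).1 (by have := (hC c hc).2.2; omega)) hc₀ hc₀'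
      have := card_pos.mpr ⟨u, huL⟩
      exact ⟨2, one_le_two, le_rfl, Or.inl le_rfl, by omega⟩
  have hgW : g ∈ W := mem_insert_self g _
  have hR : IsGrading G (S \ W) r δ := hS.sdiff hclosed
  refine HasLightItalian.of_spider hS IH (W := W) (L := L) (g := g)
    (insert_subset hg (union_subset (fun c hc => (hC c hc).1) fun x hx => (hL x hx).1)) hgW
    (subset_union_right.trans (subset_insert _ _)) ha1 ha2 (fun v hv => ?_) hclosed ?_ hweight
  · rcases mem_insert.mp hv with rfl | hv
    · exact Or.inl rfl
    rcases mem_union.mp hv with hvC | hvL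
    · exact Or.inr (Or.inr ⟨(hC v hvC).2.1, hcov.imp_right fun h => h v hvC⟩)
    · exact Or.inr (Or.inl hvL)
  · by_cases hgr : g = r
    · exact Or.inl (hR.eq_empty_of_root_notMem fun hr => (mem_sdiff.mp hr).2 (hgr ▸ hgW))
    obtain ⟨h, hh, hgh, hhg⟩ := hS.exists_parent g hg hgr
    refine Or.inr ⟨h, mem_sdiff.mpr ⟨hh, fun hhW => ?_⟩, hgh.symm⟩
    rcases mem_insert.mp hhW with rfl | hhW
    · omega
    rcases mem_union.mp hhW with hhC | hhL
    · have := (hC h hhC).2.2; omega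
    · have := (hL h hhL).2; omega

theorem hasLightItalian_of_isGrading (hS : IsGrading G S r δ) (h3 : 3 ≤ #S) :
    HasLightItalian G S := by
  induction S using Finset.strongInduction with
  | H S IH =>
  obtain ⟨u, hu, hmax⟩ := S.exists_max_image δ (card_pos.mp (by omega))
  by_cases hd : δ u ≤ 1
  · exact hasLightItalian_of_depth_le_one hS h3 fun v hv => (hmax v hv).trans hd
  by_cases hA : ∃ q ∈ S, δ q + 1 = δ u ∧ 2 ≤ #(children G S δ q)
  · obtain ⟨q, hq, hqu, h2⟩ := hA
    exact hasLightItalian_of_two_le_card_children hS IH hq (hqu ▸ hmax) (by omega) h2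
  · push Not at hA
    exact hasLightItalian_of_card_children_le_one hS IH hu hmax (by omega)
      fun q hq hqu => Nat.le_of_lt_succ (hA q hq hqu)

end ItalianBound

section StrongDifferentialBound

variable {f : V → ℕ}

lemma extNbhd_eq_compl_of_isItalianOn (hf : IsItalianOn G univ 0 f) :
    extNbhd G {v | f v ≠ 0} = ({v | f v ≠ 0} : Finset V)ᶜ := by
  ext w
  simp only [extNbhd, mem_filter, mem_univ, true_and, mem_compl, and_iff_left_iff_imp]
  intro hw
  have := hf w (mem_univ w) (by simpa using hw)
  rw [Pi.zero_apply, zero_add] at this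
  obtain ⟨y, hy, hfy⟩ :=
    exists_ne_zero_of_sum_ne_zero (by omega : ∑ y ∈ univ with G.Adj w y, f y ≠ 0)
  exact ⟨y, by simpa using hfy, (mem_filter.mp hy).2⟩

/-- A vertex with an external private neighbour `u` is the only weighted neighbour of `u`. -/
lemma two_le_of_mem_weak (hf : IsItalianOn G univ 0 f) {v : V}
    (hv : v ∈ weak G {v | f v ≠ 0}) : 2 ≤ f v := by
  obtain ⟨u, hu⟩ := (mem_filter.mp hv).2
  obtain ⟨huD, hNu⟩ := (mem_filter.mp hu).2
  have hv' : v ∈ G.neighborFinset u ∩ ({v | f v ≠ 0} : Finset V) :=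
    hNu ▸ mem_singleton_self v
  have := hf u (mem_univ u) (by simpa using huD)
  rwa [Pi.zero_apply, zero_add, sum_eq_single v] at this
  · intro y hy hyv
    by_contra hfy
    have : y ∈ G.neighborFinset u ∩ ({v | f v ≠ 0} : Finset V) := by
      simpa using ⟨(mem_filter.mp hy).2, hfy⟩
    exact hyv (mem_singleton.mp (hNu ▸ this))
  · intro hvN
    exact absurd (by simpa using (mem_inter.mp hv').1) hvN

lemma card_add_card_weak_le_sum (hf : IsItalianOn G univ 0 f) :
    #{v | f v ≠ 0} + #(weak G {v | f v ≠ 0}) ≤ ∑ v, f v := by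
  set D : Finset V := {v | f v ≠ 0}
  have hwD : weak G D ⊆ D := filter_subset _ _
  calc #D + #(weak G D) = #(D \ weak G D) + 2 * #(weak G D) := by
        have := card_sdiff_add_card_eq_card hwD
        omega
    _ ≤ ∑ v ∈ D \ weak G D, f v + ∑ v ∈ weak G D, f v := by
        gcongr
        · simpa using card_nsmul_le_sum _ f 1 fun v hv => Nat.one_le_iff_ne_zero.mpr
            (mem_filter.mp (mem_sdiff.mp hv).1).2
        · simpa [mul_comm] using
            card_nsmul_le_sum _ f 2 fun v hv => two_le_of_mem_weak G hf hv
    _ = ∑ v ∈ D, f v := sum_sdiff hwD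
    _ ≤ ∑ v, f v := sum_le_sum_of_subset (subset_univ D)

lemma card_sub_sum_le_sdiffSet (hf : IsItalianOn G univ 0 f) :
    (Fintype.card V : ℤ) - ∑ v, f v ≤ sdiffSet G {v | f v ≠ 0} := by
  have hcompl := card_compl ({v | f v ≠ 0} : Finset V)
  have hle := card_le_univ ({v | f v ≠ 0} : Finset V)
  have := card_add_card_weak_le_sum G hf
  rw [sdiffSet, extNbhd_eq_compl_of_isItalianOn G hf, hcompl, Nat.cast_sub hle]
  omega

end StrongDifferentialBound

theorem stmt_2 {V : Type*} [Fintype V] [DecidableEq V] (G : SimpleGraph V)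
    [DecidableRel G.Adj] (hconn : G.Connected) (hn : 3 ≤ Fintype.card V) :
    (Fintype.card V : ℤ) ≤ 4 * sdiff G := by
  have : Nonempty V := hconn.nonempty
  obtain ⟨f, hf, hw⟩ := hasLightItalian_of_isGrading
    (isGrading_dist hconn (Classical.arbitrary V)) (by rwa [card_univ])
  have hD := card_sub_sum_le_sdiffSet G hf
  have hle : sdiffSet G {v | f v ≠ 0} ≤ sdiff G :=
    le_sup' (sdiffSet G) (mem_powerset.mpr (subset_univ _))
  rw [card_univ] at hw
  omega

end StrongDifferential
end

section
/- If G is a connected finite simple graph with minimum degree δ(G) ≥ 2, then ∂_s(G) ≥ n(G)/3, i.e., 3·∂_s(G) ≥ n(G). -/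
open Finset

namespace StrongDifferential

variable {V : Type*} [Fintype V] [DecidableEq V] (G : SimpleGraph V) [DecidableRel G.Adj]

/-- Auxiliary: number (as an integer) of ordered adjacent pairs receiving
different colours under a `3`-colouring. -/
private def cutVal (c : V → Fin 3) : ℤ :=
  ∑ x : V, ∑ u : V, if G.Adj x u ∧ c u ≠ c x then (1 : ℤ) else 0

private lemma cutVal_update (c : V → Fin 3) (v : V) (j : Fin 3) :
    cutVal G (Function.update c v j) =
      cutVal G c + 2 * ((∑ u : V, if G.Adj v u ∧ c u ≠ j then (1 : ℤ) else 0)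
        - (∑ u : V, if G.Adj v u ∧ c u ≠ c v then (1 : ℤ) else 0)) := by
  have key : ∀ x u : V,
      (if G.Adj x u ∧ Function.update c v j u ≠ Function.update c v j x then (1 : ℤ) else 0)
        = (if G.Adj x u ∧ c u ≠ c x then (1 : ℤ) else 0)
          + ((if x = v then
                (if G.Adj v u ∧ c u ≠ j then (1 : ℤ) else 0)
                  - (if G.Adj v u ∧ c u ≠ c v then (1 : ℤ) else 0) else 0)
            + (if u = v then
                (if G.Adj v x ∧ c x ≠ j then (1 : ℤ) else 0)
                  - (if G.Adj v x ∧ c x ≠ c v then (1 : ℤ) else 0) else 0)) := by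
    intro x u
    by_cases hx : x = v <;> by_cases hu : u = v
    · subst hx; subst hu; simp [G.irrefl]
    · subst hx
      simp only [Function.update_self, Function.update_of_ne hu, if_pos rfl, if_neg hu]
      split_ifs <;> ring
    · subst hu
      simp only [Function.update_self, Function.update_of_ne hx, if_pos rfl, if_neg hx]
      have h1 : (G.Adj x u ∧ j ≠ c x) ↔ (G.Adj u x ∧ c x ≠ j) :=
        ⟨fun ⟨a, b⟩ => ⟨a.symm, b.symm⟩, fun ⟨a, b⟩ => ⟨a.symm, b.symm⟩⟩
      have h2 : (G.Adj x u ∧ c u ≠ c x) ↔ (G.Adj u x ∧ c x ≠ c u) :=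
        ⟨fun ⟨a, b⟩ => ⟨a.symm, b.symm⟩, fun ⟨a, b⟩ => ⟨a.symm, b.symm⟩⟩
      rw [if_congr h1 rfl rfl, if_congr h2 rfl rfl]
      simp only [if_true]
      ring
    · simp only [Function.update_of_ne hx, Function.update_of_ne hu, if_neg hx, if_neg hu]
      ring
  simp only [cutVal, key, Finset.sum_add_distrib, Finset.sum_ite_irrel,
    Finset.sum_const_zero, Finset.sum_ite_eq', Finset.mem_univ, if_true,
    Finset.sum_sub_distrib]
  ring

/-- Auxiliary: if every vertex has degree at least two, there is a `3`-colouring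
in which every vertex has at least two neighbours coloured differently from itself.
(Take a colouring maximising the number of bichromatic edges.) -/
private lemma exists_good_coloring (hdeg : ∀ v : V, 2 ≤ G.degree v) :
    ∃ c : V → Fin 3, ∀ v : V,
      2 ≤ ((G.neighborFinset v).filter fun u => c u ≠ c v).card := by
  obtain ⟨c, -, hc⟩ := Finset.exists_max_image (univ : Finset (V → Fin 3)) (cutVal G)
    ⟨fun _ => 0, mem_univ _⟩
  refine ⟨c, fun v => ?_⟩
  have hmax : ∀ j : Fin 3,
      (∑ u : V, if G.Adj v u ∧ c u ≠ j then (1 : ℤ) else 0)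
        ≤ (∑ u : V, if G.Adj v u ∧ c u ≠ c v then (1 : ℤ) else 0) := by
    intro j
    have h := hc (Function.update c v j) (mem_univ _)
    rw [cutVal_update] at h
    linarith
  have inner : ∀ u : V, (∑ j : Fin 3, if G.Adj v u ∧ c u ≠ j then (1 : ℤ) else 0)
      = if G.Adj v u then 2 else 0 := by
    intro u
    by_cases h : G.Adj v u
    · simp only [h, true_and, if_pos]
      have step : ∀ j : Fin 3, (if c u ≠ j then (1 : ℤ) else 0)
          = 1 - (if c u = j then 1 else 0) := by
        intro j; split_ifs <;> simp_all
      rw [Finset.sum_congr rfl fun j _ => step j, Finset.sum_sub_distrib,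
        Finset.sum_const, Finset.card_univ, Finset.sum_ite_eq]
      simp
    · simp [h]
  have hsum : (∑ j : Fin 3, ∑ u : V, if G.Adj v u ∧ c u ≠ j then (1 : ℤ) else 0)
      = 2 * (G.degree v : ℤ) := by
    rw [Finset.sum_comm, Finset.sum_congr rfl fun u _ => inner u]
    have h2 : ∀ u : V, (if G.Adj v u then (2 : ℤ) else 0)
        = 2 * (if G.Adj v u then (1 : ℤ) else 0) := by
      intro u; split_ifs <;> ring
    rw [Finset.sum_congr rfl fun u _ => h2 u, ← Finset.mul_sum, Finset.sum_boole]
    have h3 : (univ.filter fun u => G.Adj v u).card = G.degree v := by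
      rw [← SimpleGraph.neighborFinset_eq_filter]
      rfl
    rw [h3]
  have hScv : (∑ u : V, if G.Adj v u ∧ c u ≠ c v then (1 : ℤ) else 0)
      = (((G.neighborFinset v).filter fun u => c u ≠ c v).card : ℤ) := by
    rw [Finset.sum_boole]
    congr 1
    rw [SimpleGraph.neighborFinset_eq_filter, Finset.filter_filter]
  have h3t : (∑ j : Fin 3, ∑ u : V, if G.Adj v u ∧ c u ≠ j then (1 : ℤ) else 0)
      ≤ 3 * (∑ u : V, if G.Adj v u ∧ c u ≠ c v then (1 : ℤ) else 0) := by
    calc (∑ j : Fin 3, ∑ u : V, if G.Adj v u ∧ c u ≠ j then (1 : ℤ) else 0)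
        ≤ ∑ _j : Fin 3, ∑ u : V, if G.Adj v u ∧ c u ≠ c v then (1 : ℤ) else 0 :=
          Finset.sum_le_sum fun j _ => hmax j
      _ = 3 * ∑ u : V, if G.Adj v u ∧ c u ≠ c v then (1 : ℤ) else 0 := by
          simp [Finset.sum_const, Fintype.card_fin]
  have hfin : 2 * (G.degree v : ℤ)
      ≤ 3 * (((G.neighborFinset v).filter fun u => c u ≠ c v).card : ℤ) := by
    rw [← hsum, ← hScv]; exact h3t
  have hd := hdeg v
  omega

theorem stmt_3 {V : Type*} [Fintype V] [DecidableEq V] (G : SimpleGraph V)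
    [DecidableRel G.Adj] (hconn : G.Connected) (hδ : 2 ≤ G.minDegree) :
    (Fintype.card V : ℤ) ≤ 3 * sdiff G := by
  classical
  have hdeg : ∀ v : V, 2 ≤ G.degree v := fun v => le_trans hδ (G.minDegree_le_degree v)
  obtain ⟨c, hc⟩ := exists_good_coloring G hdeg
  obtain ⟨i, -, hi⟩ := Finset.exists_max_image (univ : Finset (Fin 3))
    (fun j => (univ.filter fun v => c v = j).card) ⟨0, mem_univ _⟩
  have hcard : Fintype.card V ≤ 3 * (univ.filter fun v => c v = i).card := by
    have h1 : Fintype.card V = ∑ j : Fin 3, (univ.filter fun v => c v = j).card := by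
      rw [← Finset.card_univ]
      exact Finset.card_eq_sum_card_fiberwise (fun x _ => mem_univ (c x))
    calc Fintype.card V = ∑ j : Fin 3, (univ.filter fun v => c v = j).card := h1
      _ ≤ ∑ _j : Fin 3, (univ.filter fun v => c v = i).card :=
          Finset.sum_le_sum fun j _ => hi j (mem_univ j)
      _ = 3 * (univ.filter fun v => c v = i).card := by
          simp [Finset.sum_const, Fintype.card_fin]
  set D : Finset V := univ.filter fun v => c v ≠ i with hD
  have hext : extNbhd G D = univ.filter fun v => c v = i := by
    ext u
    simp only [extNbhd, hD, Finset.mem_filter, Finset.mem_univ, true_and, not_not]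
    constructor
    · rintro ⟨h1, -⟩; exact h1
    · intro h1
      refine ⟨h1, ?_⟩
      have h2 := hc u
      have h3 : ((G.neighborFinset u).filter fun w => c w ≠ c u).Nonempty := by
        rw [← Finset.card_pos]; omega
      obtain ⟨w, hw⟩ := h3
      rw [Finset.mem_filter, SimpleGraph.mem_neighborFinset] at hw
      exact ⟨w, fun hwi => hw.2 (by rw [hwi, h1]), hw.1⟩
  have hweak : weak G D = (∅ : Finset V) := by
    rw [Finset.eq_empty_iff_forall_notMem]
    intro v hv
    rw [weak, Finset.mem_filter] at hv
    obtain ⟨hvD, u, hu⟩ := hv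
    rw [epn, Finset.mem_filter] at hu
    obtain ⟨-, huD, hNu⟩ := hu
    have hcu : c u = i := by simpa [hD] using huD
    have h2 := hc u
    have hinter : G.neighborFinset u ∩ D = (G.neighborFinset u).filter fun w => c w ≠ c u := by
      ext w
      rw [Finset.mem_inter, Finset.mem_filter]
      simp [hD, hcu]
    have hcard1 : ((G.neighborFinset u).filter fun w => c w ≠ c u).card = 1 := by
      rw [← hinter, hNu, Finset.card_singleton]
    omega
  have hsd : sdiffSet G D = (((univ.filter fun v => c v = i).card : ℤ)) := by
    rw [sdiffSet, hext, hweak]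
    simp
  have hle : sdiffSet G D ≤ sdiff G :=
    Finset.le_sup' (sdiffSet G) (Finset.mem_powerset.mpr (Finset.subset_univ D))
  calc (Fintype.card V : ℤ) ≤ 3 * ((univ.filter fun v => c v = i).card : ℤ) := by
        exact_mod_cast hcard
    _ = 3 * sdiffSet G D := by rw [hsd]
    _ ≤ 3 * sdiff G := by linarith

end StrongDifferential
end

section
/- For any finite simple graph G, n(G) − min{2γ(G), γ₂(G)} ≤ ∂_s(G) ≤ n(G) − γ(G) − σ(G), where σ(G) denotes the number of support vertices of G adjacent to more than one leaf. -/
/-!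
Lower bound: for a dominating set `D` one has `N_e(D) = V ∖ D` and `|D_w| ≤ |D|`, and for a
2-dominating set `D_w = ∅`.

Upper bound: for any `D`, the set `V ∖ N_e(D)` dominates. Every support vertex `b ∉ D_w`
with at least two leaves has all its leaves in `V ∖ N_e(D)` (a leaf in `N_e(D)` would be a
private neighbour of `b`), and trading them for `b` keeps domination, so
`γ + |B| ≤ n - |N_e(D)|` for the set `B` of such vertices, while `σ ≤ |B| + |D_w|`.
-/

open Finset

namespace StrongDifferential

variable {V : Type*} [Fintype V] [DecidableEq V] (G : SimpleGraph V) [DecidableRel G.Adj]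

def leafNeighbors (v : V) : Finset V :=
  (G.neighborFinset v).filter fun u => G.degree u = 1

variable {G}

omit [DecidableEq V] in
lemma eq_of_adj_of_degree_eq_one {l v w : V} (hl : G.degree l = 1) (hv : G.Adj l v)
    (hw : G.Adj l w) : v = w :=
  (SimpleGraph.degree_eq_one_iff_existsUnique_adj.mp hl).unique hv hw

omit [DecidableEq V] in
lemma neighborFinset_eq_singleton_of_degree_eq_one {l v : V} (hl : G.degree l = 1)
    (hv : G.Adj l v) : G.neighborFinset l = {v} :=
  eq_singleton_iff_unique_mem.mpr ⟨(G.mem_neighborFinset _ _).mpr hv,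
    fun _ hw => eq_of_adj_of_degree_eq_one hl ((G.mem_neighborFinset _ _).mp hw) hv⟩

omit [Fintype V] [DecidableEq V] [DecidableRel G.Adj] in
lemma gamma_le_card {D : Finset V} (hD : IsDomSet G D) : gamma G ≤ #D :=
  Nat.sInf_le ⟨D, hD, rfl⟩

omit [DecidableEq V] [DecidableRel G.Adj] in
variable (G) in
lemma exists_isDomSet_card_eq_gamma : ∃ D : Finset V, IsDomSet G D ∧ #D = gamma G :=
  Nat.sInf_mem (s := {k | ∃ D : Finset V, IsDomSet G D ∧ #D = k})
    ⟨_, univ, fun v hv => absurd (mem_univ v) hv, rfl⟩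

variable (G) in
lemma exists_is2DomSet_card_eq_gamma2 : ∃ D : Finset V, Is2DomSet G D ∧ #D = gamma2 G :=
  Nat.sInf_mem (s := {k | ∃ D : Finset V, Is2DomSet G D ∧ #D = k})
    ⟨_, univ, fun v hv => absurd (mem_univ v) hv, rfl⟩

lemma Is2DomSet.isDomSet {D : Finset V} (hD : Is2DomSet G D) : IsDomSet G D := by
  intro v hv
  obtain ⟨u, hu⟩ : (G.neighborFinset v ∩ D).Nonempty := card_pos.mp (by grind [hD v hv])
  rw [mem_inter, SimpleGraph.mem_neighborFinset] at hu
  exact ⟨u, hu.2, hu.1⟩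

lemma Is2DomSet.weak_eq_empty {D : Finset V} (hD : Is2DomSet G D) : weak G D = ∅ := by
  refine eq_empty_of_forall_notMem fun v hv => ?_
  obtain ⟨u, hu⟩ := (mem_filter.mp hv).2
  obtain ⟨-, huD, hNu⟩ := mem_filter.mp hu
  simpa [hNu] using hD u huD

lemma IsDomSet.extNbhd_eq_compl {D : Finset V} (hD : IsDomSet G D) : extNbhd G D = Dᶜ := by
  ext u
  simpa [extNbhd] using hD u

variable (G) in
lemma isDomSet_compl_extNbhd (D : Finset V) : IsDomSet G (extNbhd G D)ᶜ := by
  intro u hu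
  obtain ⟨-, huD, v, hvD, huv⟩ := mem_filter.mp (not_not.mp (mem_compl.not.mp hu))
  exact ⟨v, mem_compl.mpr fun hv => (mem_filter.mp hv).2.1 hvD, huv⟩

variable (G) in
lemma sdiffSet_le_sdiff (D : Finset V) : sdiffSet G D ≤ sdiff G :=
  le_sup' (sdiffSet G) (mem_powerset.mpr (subset_univ D))

lemma IsDomSet.card_sub_two_mul_card_le_sdiffSet {D : Finset V} (hD : IsDomSet G D) :
    (Fintype.card V : ℤ) - 2 * #D ≤ sdiffSet G D := by
  have hweak : #(weak G D) ≤ #D := card_filter_le _ _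
  have hcompl : #Dᶜ + #D = Fintype.card V := card_compl_add_card D
  rw [sdiffSet, hD.extNbhd_eq_compl]
  omega

lemma Is2DomSet.sdiffSet_eq {D : Finset V} (hD : Is2DomSet G D) :
    sdiffSet G D = Fintype.card V - #D := by
  have hcompl : #Dᶜ + #D = Fintype.card V := card_compl_add_card D
  rw [sdiffSet, hD.isDomSet.extNbhd_eq_compl, hD.weak_eq_empty, card_empty]
  omega

/-- A leaf dominates nothing but its support vertex. -/
lemma IsDomSet.sdiff_biUnion_leafNeighbors_union {S : Finset V} (hS : IsDomSet G S)
    (B : Finset V) : IsDomSet G ((S \ B.biUnion (leafNeighbors G)) ∪ B) := by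
  intro u hu
  simp only [mem_union, mem_sdiff, not_or, not_and, not_not] at hu
  obtain ⟨huS, huB⟩ := hu
  by_cases hu' : u ∈ S
  · obtain ⟨b, hbB, hub⟩ := mem_biUnion.mp (huS hu')
    exact ⟨b, mem_union_right _ hbB, ((G.mem_neighborFinset _ _).mp (mem_filter.mp hub).1).symm⟩
  obtain ⟨s, hsS, hus⟩ := hS u hu'
  refine ⟨s, mem_union_left _ (mem_sdiff.mpr ⟨hsS, fun hsL => ?_⟩), hus⟩
  obtain ⟨b, hbB, hbs⟩ := mem_biUnion.mp hsL
  obtain ⟨hbs, hs⟩ := mem_filter.mp hbs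
  rw [G.mem_neighborFinset] at hbs
  exact huB (eq_of_adj_of_degree_eq_one hs hus.symm hbs.symm ▸ hbB)

lemma gamma_add_card_le {S B : Finset V} (hS : IsDomSet G S)
    (hB : ∀ b ∈ B, 2 ≤ #(leafNeighbors G b)) (hBS : ∀ b ∈ B, leafNeighbors G b ⊆ S) :
    gamma G + #B ≤ #S := by
  set L := B.biUnion (leafNeighbors G)
  have hLS : L ⊆ S := biUnion_subset.mpr hBS
  have hL : 2 * #B ≤ #L := by
    rw [card_biUnion]
    · simpa [mul_comm] using card_nsmul_le_sum B _ 2 hB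
    intro b _ c _ hbc
    refine disjoint_left.mpr fun l hlb hlc => hbc ?_
    simp only [leafNeighbors, mem_filter, SimpleGraph.mem_neighborFinset] at hlb hlc
    exact eq_of_adj_of_degree_eq_one hlb.2 hlb.1.symm hlc.1.symm
  have hγ : gamma G ≤ #((S \ L) ∪ B) :=
    gamma_le_card (hS.sdiff_biUnion_leafNeighbors_union B)
  have hcard := card_union_le (S \ L) B
  have hsdiff := card_sdiff_of_subset hLS
  have hLS' := card_le_card hLS
  omega

lemma leafNeighbors_subset_compl_extNbhd {D : Finset V} {b : V} (hb : b ∉ weak G D) :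
    leafNeighbors G b ⊆ (extNbhd G D)ᶜ := by
  intro l hlb
  obtain ⟨hbl, hl⟩ := mem_filter.mp hlb
  have hlb : G.Adj l b := ((G.mem_neighborFinset _ _).mp hbl).symm
  refine mem_compl.mpr fun hlN => hb ?_
  obtain ⟨-, hlD, d, hdD, hld⟩ := mem_filter.mp hlN
  obtain rfl : d = b := eq_of_adj_of_degree_eq_one hl hld hlb
  have hNl : G.neighborFinset l ∩ D = {d} := by
    rw [neighborFinset_eq_singleton_of_degree_eq_one hl hlb, singleton_inter_of_mem hdD]
  exact mem_filter.mpr ⟨hdD, l, mem_filter.mpr ⟨mem_univ l, hlD, hNl⟩⟩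

variable (G) in
lemma sdiffSet_le (D : Finset V) :
    sdiffSet G D ≤ (Fintype.card V : ℤ) - gamma G - sigmaSupp G := by
  set A := univ.filter fun v => 2 ≤ #(leafNeighbors G v)
  set B := A \ weak G D
  have hγ : gamma G + #B ≤ #(extNbhd G D)ᶜ :=
    gamma_add_card_le (isDomSet_compl_extNbhd G D)
      (fun b hb => (mem_filter.mp (mem_sdiff.mp hb).1).2)
      fun b hb => leafNeighbors_subset_compl_extNbhd (mem_sdiff.mp hb).2
  have hσ : sigmaSupp G ≤ #B + #(weak G D) := by
    calc #A ≤ #(B ∪ weak G D) := card_le_card (by simp [B])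
      _ ≤ #B + #(weak G D) := card_union_le _ _
  have hcompl := card_compl_add_card (extNbhd G D)
  rw [sdiffSet]
  omega

theorem stmt_5 {V : Type*} [Fintype V] [DecidableEq V] (G : SimpleGraph V)
    [DecidableRel G.Adj] :
    (Fintype.card V : ℤ) - min (2 * gamma G) (gamma2 G) ≤ sdiff G ∧
      sdiff G ≤ (Fintype.card V : ℤ) - gamma G - sigmaSupp G := by
  refine ⟨?_, sup'_le _ _ fun D _ => sdiffSet_le G D⟩
  obtain ⟨D₁, hD₁, hcard₁⟩ := exists_isDomSet_card_eq_gamma G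
  obtain ⟨D₂, hD₂, hcard₂⟩ := exists_is2DomSet_card_eq_gamma2 G
  have h₁ := hD₁.card_sub_two_mul_card_le_sdiffSet.trans (sdiffSet_le_sdiff G D₁)
  have h₂ := hD₂.sdiffSet_eq ▸ sdiffSet_le_sdiff G D₂
  omega

end StrongDifferential
end

section
/- Let G be a finite simple graph. If γ₂(G) = γ(G), then ∂_s(G) = n(G) − γ₂(G). -/
open Finset

namespace StrongDifferential

variable {V : Type*} [Fintype V] [DecidableEq V] (G : SimpleGraph V) [DecidableRel G.Adj]

theorem stmt_6 {V : Type*} [Fintype V] [DecidableEq V] (G : SimpleGraph V)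
    [DecidableRel G.Adj] (h : gamma2 G = gamma G) :
    sdiff G = (Fintype.card V : ℤ) - gamma2 G := by
  classical
  -- obtain a minimum 2-dominating set S
  obtain ⟨S, hS2, hScard⟩ :
      ∃ D : Finset V, Is2DomSet G D ∧ D.card = gamma2 G := by
    have hne : {k | ∃ D : Finset V, Is2DomSet G D ∧ D.card = k}.Nonempty :=
      ⟨(univ : Finset V).card, univ, fun v hv => absurd (mem_univ v) hv, rfl⟩
    exact Nat.sInf_mem hne
  have hgam_le : ∀ D : Finset V, IsDomSet G D → gamma G ≤ D.card :=
    fun D hD => Nat.sInf_le ⟨D, hD, rfl⟩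
  have hcardS : S.card ≤ Fintype.card V := by
    simpa using card_le_card (subset_univ S)
  -- weak G S = ∅
  have hweak : weak G S = ∅ := by
    rw [eq_empty_iff_forall_notMem]
    intro v hv
    rw [weak, mem_filter] at hv
    obtain ⟨hvS, u, hu⟩ := hv
    rw [epn, mem_filter] at hu
    have h2 := hS2 u hu.2.1
    rw [hu.2.2] at h2
    simp at h2
  -- extNbhd G S = univ \ S
  have hext : extNbhd G S = univ \ S := by
    ext u
    simp only [extNbhd, mem_filter, mem_univ, true_and, mem_sdiff]
    constructor
    · rintro ⟨h1, -⟩; exact h1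
    · intro h1
      refine ⟨h1, ?_⟩
      have h2 := hS2 u h1
      have : (G.neighborFinset u ∩ S).Nonempty := by
        rw [← card_pos]; omega
      obtain ⟨v, hv⟩ := this
      rw [mem_inter, SimpleGraph.mem_neighborFinset] at hv
      exact ⟨v, hv.2, hv.1⟩
  have hlow : (Fintype.card V : ℤ) - gamma2 G ≤ sdiff G := by
    have hmem : S ∈ (univ : Finset V).powerset := mem_powerset.mpr (subset_univ S)
    have := Finset.le_sup' (sdiffSet G) hmem
    have hval : sdiffSet G S = (Fintype.card V : ℤ) - gamma2 G := by
      rw [sdiffSet, hweak, hext, card_sdiff_of_subset (subset_univ S), card_empty, card_univ,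
        Nat.cast_sub hcardS, ← hScard]
      simp
    rwa [hval] at this
  have hup : sdiff G ≤ (Fintype.card V : ℤ) - gamma2 G := by
    apply Finset.sup'_le
    intro D hD
    have h1 : sdiffSet G D ≤ ((extNbhd G D).card : ℤ) := by
      have : (0 : ℤ) ≤ (weak G D).card := Int.natCast_nonneg _
      rw [sdiffSet]; omega
    have hdom : IsDomSet G (univ \ extNbhd G D) := by
      intro v hv
      have hv' : v ∈ extNbhd G D := by
        by_contra hc
        exact hv (mem_sdiff.mpr ⟨mem_univ v, hc⟩)
      simp only [extNbhd, mem_filter, mem_univ, true_and] at hv'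
      obtain ⟨hvD, u, huD, hadj⟩ := hv'
      refine ⟨u, mem_sdiff.mpr ⟨mem_univ u, ?_⟩, hadj⟩
      simp only [extNbhd, mem_filter, mem_univ, true_and, not_and]
      intro hc; exact absurd huD hc
    have h2 : gamma G ≤ (univ \ extNbhd G D).card := hgam_le _ hdom
    rw [card_sdiff_of_subset (subset_univ _), card_univ] at h2
    have h3 : (extNbhd G D).card ≤ Fintype.card V := by
      simpa using card_le_card (subset_univ (extNbhd G D))
    have h4 : ((extNbhd G D).card : ℤ) ≤ (Fintype.card V : ℤ) - gamma G := by
      have : gamma G + (extNbhd G D).card ≤ Fintype.card V := by omega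
      push_cast at this ⊢
      omega
    rw [h]
    omega
  omega

end StrongDifferential
end

section
/- For a finite simple graph G, the following are equivalent: (i) ∂_s(G) = n(G) − γ₂(G); (ii) there exists a set D ⊆ V(G) with ∂_s(D) = ∂_s(G) such that D is a dominating set of G and D_w = ∅ (no vertex of D has an external private neighbour with respect to D). -/
open Finset

namespace StrongDifferential

variable {V : Type*} [Fintype V] [DecidableEq V] (G : SimpleGraph V) [DecidableRel G.Adj]

lemma twoDom_isDom (D : Finset V) (h : Is2DomSet G D) : IsDomSet G D := by
  intro v hv
  have h2 := h v hv
  have hne : (G.neighborFinset v ∩ D).Nonempty := by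
    rw [← card_pos]; omega
  obtain ⟨u, hu⟩ := hne
  simp only [mem_inter, SimpleGraph.mem_neighborFinset] at hu
  exact ⟨u, hu.2, hu.1⟩

lemma twoDom_weak_empty (D : Finset V) (h : Is2DomSet G D) : weak G D = ∅ := by
  rw [eq_empty_iff_forall_notMem]
  intro v hv
  simp only [weak, mem_filter] at hv
  obtain ⟨hvD, u, hu⟩ := hv
  simp only [epn, mem_filter, mem_univ, true_and] at hu
  have h2 := h u hu.1
  rw [hu.2, card_singleton] at h2
  omega

lemma dom_weak_twoDom (D : Finset V) (hd : IsDomSet G D) (hw : weak G D = ∅) :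
    Is2DomSet G D := by
  intro u hu
  by_contra hlt
  push_neg at hlt
  have hpos : 0 < (G.neighborFinset u ∩ D).card := by
    rw [card_pos]
    obtain ⟨v, hvD, hadj⟩ := hd u hu
    exact ⟨v, by simp [mem_inter, SimpleGraph.mem_neighborFinset, hadj, hvD]⟩
  have h1 : (G.neighborFinset u ∩ D).card = 1 := by omega
  obtain ⟨v, hv⟩ := card_eq_one.mp h1
  have hvD : v ∈ D := by
    have : v ∈ G.neighborFinset u ∩ D := by rw [hv]; exact mem_singleton_self v
    exact (mem_inter.mp this).2
  have hvweak : v ∈ weak G D := by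
    simp only [weak, mem_filter]
    exact ⟨hvD, u, by simp only [epn, mem_filter, mem_univ, true_and]; exact ⟨hu, hv⟩⟩
  rw [hw] at hvweak
  exact absurd hvweak (notMem_empty v)

lemma dom_extNbhd (D : Finset V) (h : IsDomSet G D) : extNbhd G D = univ \ D := by
  ext u
  simp only [extNbhd, mem_filter, mem_univ, true_and, mem_sdiff]
  constructor
  · intro h1
    exact h1.1
  · intro h1
    obtain ⟨v, hvD, hadj⟩ := h u h1
    exact ⟨h1, v, hvD, hadj⟩

lemma sdiffSet_of_dom_weak (D : Finset V) (hd : IsDomSet G D) (hw : weak G D = ∅) :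
    sdiffSet G D = (Fintype.card V : ℤ) - D.card := by
  rw [sdiffSet, dom_extNbhd G D hd, hw, card_empty, card_sdiff_of_subset (subset_univ D), card_univ]
  have h : D.card ≤ Fintype.card V := card_le_univ D
  omega

theorem stmt_8 {V : Type*} [Fintype V] [DecidableEq V] (G : SimpleGraph V)
    [DecidableRel G.Adj] :
    sdiff G = (Fintype.card V : ℤ) - gamma2 G ↔
      ∃ D : Finset V, sdiffSet G D = sdiff G ∧ IsDomSet G D ∧ weak G D = ∅ := by
  have hne : {k | ∃ D : Finset V, Is2DomSet G D ∧ D.card = k}.Nonempty :=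
    ⟨(univ : Finset V).card, univ, fun v hv => absurd (mem_univ v) hv, rfl⟩
  obtain ⟨D0, hD0, hcard0⟩ := Nat.sInf_mem hne
  have hdom0 := twoDom_isDom G D0 hD0
  have hweak0 := twoDom_weak_empty G D0 hD0
  have hval0 : sdiffSet G D0 = (Fintype.card V : ℤ) - gamma2 G := by
    rw [sdiffSet_of_dom_weak G D0 hdom0 hweak0, hcard0]; rfl
  have hle : ∀ D : Finset V, sdiffSet G D ≤ sdiff G := fun D =>
    le_sup' (sdiffSet G) (mem_powerset.mpr (subset_univ D))
  constructor
  · intro h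
    exact ⟨D0, by rw [hval0, h], hdom0, hweak0⟩
  · rintro ⟨D, hD, hdom, hweak⟩
    have h2 : Is2DomSet G D := dom_weak_twoDom G D hdom hweak
    have hγ : gamma2 G ≤ D.card := Nat.sInf_le ⟨D, h2, rfl⟩
    have h1 : sdiff G ≤ (Fintype.card V : ℤ) - gamma2 G := by
      rw [← hD, sdiffSet_of_dom_weak G D hdom hweak]
      have : (gamma2 G : ℤ) ≤ D.card := by exact_mod_cast hγ
      omega
    have h2' : (Fintype.card V : ℤ) - gamma2 G ≤ sdiff G := by
      rw [← hval0]; exact hle D0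
    omega

end StrongDifferential
end

section
/- Let G be a finite simple graph. If there exists a minimum dominating set D of G (i.e., a dominating set with |D| = γ(G)) such that D_s ≠ ∅, then ∂_s(G) ≥ n(G) − 2γ(G) + 1. -/
open Finset

namespace StrongDifferential

variable {V : Type*} [Fintype V] [DecidableEq V] (G : SimpleGraph V) [DecidableRel G.Adj]

theorem stmt_10 {V : Type*} [Fintype V] [DecidableEq V] (G : SimpleGraph V)
    [DecidableRel G.Adj]
    (h : ∃ D : Finset V, IsDomSet G D ∧ D.card = gamma G ∧ (strong G D).Nonempty) :
    (Fintype.card V : ℤ) - 2 * gamma G + 1 ≤ sdiff G := by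
  obtain ⟨D, hdom, hcard, hs⟩ := h
  have hmem : D ∈ (univ : Finset V).powerset := mem_powerset.2 (subset_univ D)
  refine le_trans ?_ (Finset.le_sup' (sdiffSet G) hmem)
  have hext : extNbhd G D = univ \ D := by
    ext u
    simp only [extNbhd, mem_filter, mem_univ, true_and, mem_sdiff]
    exact ⟨fun h => h.1, fun hu => ⟨hu, hdom u hu⟩⟩
  have hweak : weak G D ⊆ D := filter_subset _ _
  have hcards : (strong G D).card = D.card - (weak G D).card := card_sdiff_of_subset hweak
  have hwle : (weak G D).card ≤ D.card := card_le_card hweak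
  have hone : 1 ≤ (strong G D).card := card_pos.2 hs
  have hDle : D.card ≤ Fintype.card V := by
    simpa using card_le_card (subset_univ D)
  have hextcard : (extNbhd G D).card = Fintype.card V - D.card := by
    rw [hext, card_sdiff_of_subset (subset_univ D), card_univ]
  unfold sdiffSet
  rw [hextcard]
  omega

end StrongDifferential
end

section
/- Let G be a finite simple graph with minimum degree δ(G) ≥ 2. Then ∂_s(G) ≥ (n(G) − γ(G))/2, i.e., 2·∂_s(G) ≥ n(G) − γ(G). -/
open Finset

namespace StrongDifferential

variable {V : Type*} [Fintype V] [DecidableEq V] (G : SimpleGraph V) [DecidableRel G.Adj]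

/-- Ore-type lemma: if every vertex of `A` has a neighbour in `A`, then there is
`S ⊆ A` of size at most `|A|/2` dominating `A`. -/
lemma ore {V : Type*} [Fintype V] [DecidableEq V] (G : SimpleGraph V)
    [DecidableRel G.Adj] (A : Finset V) (hA : ∀ a ∈ A, ∃ b ∈ A, G.Adj a b) :
    ∃ S ⊆ A, 2 * S.card ≤ A.card ∧ ∀ a ∈ A, a ∉ S → ∃ s ∈ S, G.Adj a s := by
  classical
  set 𝒟 : Finset (Finset V) :=
    A.powerset.filter (fun S => ∀ a ∈ A, a ∉ S → ∃ s ∈ S, G.Adj a s) with h𝒟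
  have hAmem : A ∈ 𝒟 := by
    simp only [h𝒟, mem_filter, mem_powerset]
    exact ⟨Finset.Subset.refl A, fun a ha hna => absurd ha hna⟩
  obtain ⟨S, hS𝒟, hmin⟩ := 𝒟.exists_min_image Finset.card ⟨A, hAmem⟩
  rw [h𝒟, mem_filter, mem_powerset] at hS𝒟
  obtain ⟨hSA, hSdom⟩ := hS𝒟
  -- `A \ S` also dominates `A`
  have hcompl : ∀ a ∈ A, a ∉ A \ S → ∃ s ∈ A \ S, G.Adj a s := by
    intro a haA haT
    have haS : a ∈ S := by
      by_contra h
      exact haT (mem_sdiff.mpr ⟨haA, h⟩)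
    by_contra hno
    push_neg at hno
    -- every neighbour of `a` inside `A` is in `S`
    have hnb : ∀ b ∈ A, G.Adj a b → b ∈ S := by
      intro b hbA hab
      by_contra hbS
      exact hno b (mem_sdiff.mpr ⟨hbA, hbS⟩) hab
    -- then `S.erase a` dominates, contradicting minimality
    have herase : S.erase a ∈ 𝒟 := by
      rw [h𝒟, mem_filter, mem_powerset]
      refine ⟨(erase_subset a S).trans hSA, ?_⟩
      intro b hbA hbS'
      by_cases hba : b = a
      · subst hba
        obtain ⟨c, hcA, hbc⟩ := hA b hbA
        have hcS : c ∈ S := hnb c hcA hbc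
        exact ⟨c, mem_erase.mpr ⟨(G.ne_of_adj hbc).symm, hcS⟩, hbc⟩
      · have hbS : b ∉ S := fun h => hbS' (mem_erase.mpr ⟨hba, h⟩)
        obtain ⟨s, hsS, hbs⟩ := hSdom b hbA hbS
        have hsa : s ≠ a := by
          rintro rfl
          exact hbS (hnb b hbA hbs.symm)
        exact ⟨s, mem_erase.mpr ⟨hsa, hsS⟩, hbs⟩
    have := hmin _ herase
    have hlt : (S.erase a).card < S.card := card_erase_lt_of_mem haS
    omega
  have hcard : (A \ S).card + S.card = A.card := card_sdiff_add_card_eq_card hSA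
  by_cases h2 : 2 * S.card ≤ A.card
  · exact ⟨S, hSA, h2, hSdom⟩
  · refine ⟨A \ S, sdiff_subset, by omega, ?_⟩
    exact hcompl

theorem stmt_11 {V : Type*} [Fintype V] [DecidableEq V] (G : SimpleGraph V)
    [DecidableRel G.Adj] (hδ : 2 ≤ G.minDegree) :
    (Fintype.card V : ℤ) - gamma G ≤ 2 * sdiff G := by
  classical
  -- a minimum dominating set `D`
  have hne : {k | ∃ D : Finset V, IsDomSet G D ∧ D.card = k}.Nonempty :=
    ⟨(univ : Finset V).card, univ, fun v hv => absurd (mem_univ v) hv, rfl⟩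
  obtain ⟨D, hDdom, hDcard⟩ :
      ∃ D : Finset V, IsDomSet G D ∧ D.card = gamma G := Nat.sInf_mem hne
  set U : Finset V := Dᶜ with hU
  set A : Finset V := U.filter (fun u => ∃ b ∈ U, G.Adj u b) with hAdef
  have hA : ∀ a ∈ A, ∃ b ∈ A, G.Adj a b := by
    intro a ha
    rw [hAdef, mem_filter] at ha
    obtain ⟨haU, b, hbU, hab⟩ := ha
    refine ⟨b, ?_, hab⟩
    rw [hAdef, mem_filter]
    exact ⟨hbU, a, haU, hab.symm⟩
  obtain ⟨S, hSA, hScard, hSdom⟩ := ore G A hA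
  have hSU : S ⊆ U := hSA.trans (filter_subset _ _)
  set T : Finset V := D ∪ S with hT
  have hDT : D ⊆ T := subset_union_left
  -- external neighbourhood of `T` is the complement of `T`
  have hext : extNbhd G T = Tᶜ := by
    ext u
    simp only [extNbhd, mem_filter, mem_univ, true_and, mem_compl]
    constructor
    · exact fun h => h.1
    · intro h
      refine ⟨h, ?_⟩
      have huD : u ∉ D := fun hd => h (hDT hd)
      obtain ⟨d, hdD, hud⟩ := hDdom u huD
      exact ⟨d, hDT hdD, hud⟩
  -- no vertex of `T` has an external private neighbour
  have hweak : weak G T = ∅ := by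
    rw [Finset.eq_empty_iff_forall_notMem]
    intro v hv
    rw [weak, mem_filter] at hv
    obtain ⟨hvT, u, hu⟩ := hv
    rw [epn, mem_filter] at hu
    obtain ⟨-, huT, hupriv⟩ := hu
    have huD : u ∉ D := fun hd => huT (hDT hd)
    obtain ⟨d, hdD, hud⟩ := hDdom u huD
    have hdv : d = v := by
      have : d ∈ G.neighborFinset u ∩ T := by
        rw [mem_inter, SimpleGraph.mem_neighborFinset]
        exact ⟨hud, hDT hdD⟩
      rw [hupriv, mem_singleton] at this
      exact this
    have hvD : v ∈ D := hdv ▸ hdD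
    have hvN : v ∈ G.neighborFinset u := by
      have : v ∈ G.neighborFinset u ∩ T := by rw [hupriv]; exact mem_singleton_self v
      exact mem_of_mem_inter_left this
    -- `u` has a neighbour `w ≠ v`, which must lie outside `T`
    have hdeg : 1 < (G.neighborFinset u).card := by
      have h1 : G.minDegree ≤ G.degree u := G.minDegree_le_degree u
      have h2 : G.degree u = (G.neighborFinset u).card := rfl
      omega
    obtain ⟨w, hwN, hwv⟩ := Finset.exists_mem_ne hdeg v
    have hwT : w ∉ T := by
      intro hwT
      have : w ∈ G.neighborFinset u ∩ T := mem_inter.mpr ⟨hwN, hwT⟩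
      rw [hupriv, mem_singleton] at this
      exact hwv this
    have hwU : w ∈ U := by
      rw [hU, mem_compl]
      exact fun hd => hwT (hDT hd)
    have huA : u ∈ A := by
      rw [hAdef, mem_filter]
      refine ⟨?_, w, hwU, (SimpleGraph.mem_neighborFinset _ _ _).mp hwN⟩
      rw [hU, mem_compl]
      exact huD
    have huS : u ∉ S := fun h => huT (mem_union_right _ h)
    obtain ⟨s, hsS, hus⟩ := hSdom u huA huS
    have hsv : s = v := by
      have : s ∈ G.neighborFinset u ∩ T := by
        rw [mem_inter, SimpleGraph.mem_neighborFinset]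
        exact ⟨hus, mem_union_right _ hsS⟩
      rw [hupriv, mem_singleton] at this
      exact this
    have : v ∈ U := hSU (hsv ▸ hsS)
    rw [hU, mem_compl] at this
    exact this hvD
  -- compute the strong differential of `T`
  have hsdT : sdiffSet G T = ((Tᶜ).card : ℤ) := by
    rw [sdiffSet, hext, hweak]
    simp
  have hle : sdiffSet G T ≤ sdiff G :=
    Finset.le_sup' (sdiffSet G) (mem_powerset.mpr (subset_univ T))
  -- cardinality bookkeeping
  have hTcard : T.card ≤ D.card + S.card := card_union_le D S
  have hTuniv : T.card ≤ Fintype.card V := by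
    simpa using card_le_card (subset_univ T)
  have hcompl : (Tᶜ).card = Fintype.card V - T.card := card_compl T
  have hAU : A.card ≤ U.card := card_le_card (filter_subset _ _)
  have hUcard : U.card = Fintype.card V - D.card := card_compl D
  have hDuniv : D.card ≤ Fintype.card V := by
    simpa using card_le_card (subset_univ D)
  have key : Fintype.card V ≤ 2 * (Tᶜ).card + D.card := by omega
  have : (Fintype.card V : ℤ) - D.card ≤ 2 * ((Tᶜ).card : ℤ) := by
    omega
  rw [← hDcard]
  calc (Fintype.card V : ℤ) - D.card ≤ 2 * ((Tᶜ).card : ℤ) := this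
    _ = 2 * sdiffSet G T := by rw [hsdT]
    _ ≤ 2 * sdiff G := by linarith

end StrongDifferential
end

section
/- For a finite simple graph G, the following are equivalent: (i) ∂_s(G) = ∂(G); (ii) there exists a set D ⊆ V(G) with ∂_s(D) = ∂_s(G) such that D_s = ∅ (every vertex of D has an external private neighbour with respect to D). -/
open Finset

namespace StrongDifferential

variable {V : Type*} [Fintype V] [DecidableEq V] (G : SimpleGraph V) [DecidableRel G.Adj]

theorem stmt_13 {V : Type*} [Fintype V] [DecidableEq V] (G : SimpleGraph V)
    [DecidableRel G.Adj] :
    sdiff G = gdiff G ↔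
      ∃ D : Finset V, sdiffSet G D = sdiff G ∧ strong G D = ∅ := by
  have hweak : ∀ D : Finset V, weak G D ⊆ D := fun D => filter_subset _ _
  have hle : ∀ D : Finset V, diffSet G D ≤ sdiffSet G D := by
    intro D
    have := card_le_card (hweak D)
    unfold diffSet sdiffSet
    omega
  have hles : ∀ D : Finset V, sdiffSet G D ≤ sdiff G := fun D =>
    le_sup' _ (mem_powerset.2 (subset_univ D))
  have hgd : gdiff G ≤ sdiff G := by
    apply Finset.sup'_le
    intro D _
    exact (hle D).trans (hles D)
  constructor
  · intro h
    obtain ⟨D, -, hD⟩ := Finset.exists_mem_eq_sup' (⟨∅, empty_mem_powerset _⟩ :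
      (univ : Finset V).powerset.Nonempty) (diffSet G)
    have hDg : diffSet G D = gdiff G := hD.symm
    have h1 : sdiffSet G D = sdiff G := by
      have := hle D
      have := hles D
      omega
    have hcard : (weak G D).card = D.card := by
      have h2 : sdiffSet G D = diffSet G D := by omega
      unfold diffSet sdiffSet at h2
      omega
    have hwd : weak G D = D := eq_of_subset_of_card_le (hweak D) (by omega)
    exact ⟨D, h1, by simp [strong, hwd]⟩
  · rintro ⟨D, h1, h2⟩
    have hwd : weak G D = D := by
      apply eq_of_subset_of_card_le (hweak D)
      have : D \ weak G D = ∅ := h2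
      have := sdiff_eq_empty_iff_subset.1 this
      exact card_le_card this
    have h3 : diffSet G D = sdiffSet G D := by
      unfold diffSet sdiffSet
      rw [hwd]
    have h4 : diffSet G D ≤ gdiff G := le_sup' _ (mem_powerset.2 (subset_univ D))
    omega

end StrongDifferential
end
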